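/- Let X and Y be independent random variables with values in measurable spaces 𝒳 and 𝒴, let 𝖽 : 𝒳 × 𝒴 → [0,∞) be jointly measurable with E[𝖽(X,Y)³] < ∞, let λ ≥ 0 and c ≥ 0, and define ȷ(x) = −λ c − ln E[exp(−λ 𝖽(x,Y))] (expectation over Y only). Then the centered third absolute moment satisfies E[ |ȷ(X) − E[ȷ(X)]|³ ] ≤ 32 λ³ ( E[𝖽(X,Y)³] + c³ ). (This is the per-coordinate third-moment estimate used in the converse proof of the paper's Theorem 1 to verify the Berry–Esseen moment condition for the d-tilted information.) -/

import Mathlib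

/-!
Writing `g x = -log E[exp(-λ 𝖽(x,Y))]`, we have `ȷ = -λc + g` with `g ≥ 0`, and Jensen's
inequality for `exp` gives `g x ≤ λ E[𝖽(x,Y)]`, hence `g x ^ 3 ≤ λ³ E[𝖽(x,Y)³]`. The constant
`-λc` drops out after centering, and for nonnegative `a, b` one has `|a - b|³ ≤ a³ + b³`, so
together with `(E g)³ ≤ E[g³]` the centered third moment is at most `2 E[g³] ≤ 2 λ³ E[𝖽(X,Y)³]`.
-/

open MeasureTheory ProbabilityTheory Real

section Moments

variable {Ω : Type*} {m : MeasurableSpace Ω} {μ : Measure Ω}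

lemma abs_sub_pow_three_le_add {a b : ℝ} (ha : 0 ≤ a) (hb : 0 ≤ b) :
    |a - b| ^ 3 ≤ a ^ 3 + b ^ 3 := by
  rcases le_total a b with hab | hab
  · rw [abs_of_nonpos (sub_nonpos.2 hab)]
    nlinarith [mul_nonneg (mul_nonneg ha ha) (sub_nonneg.2 hab), mul_nonneg ha (sub_nonneg.2 hab),
      pow_nonneg ha 3]
  · rw [abs_of_nonneg (sub_nonneg.2 hab)]
    nlinarith [mul_nonneg (mul_nonneg hb hb) (sub_nonneg.2 hab), mul_nonneg hb (sub_nonneg.2 hab),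
      pow_nonneg hb 3]

lemma integrable_of_integrable_pow_of_nonneg [IsFiniteMeasure μ] {f : Ω → ℝ}
    (hf : AEStronglyMeasurable f μ) (hf0 : 0 ≤ f) {n : ℕ} (hn : n ≠ 0)
    (hint : Integrable (fun x => f x ^ n) μ) : Integrable f μ := by
  have hnorm : ∀ k : ℕ, (fun x => ‖f x‖ ^ k) = fun x => f x ^ k := fun k =>
    funext fun x => by rw [Real.norm_of_nonneg (hf0 x)]
  have h1 := integrable_norm_pow_of_le hf (Nat.one_le_iff_ne_zero.2 hn) (hnorm n ▸ hint)
  rw [hnorm 1] at h1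
  simpa using h1

lemma pow_integral_le_integral_pow [IsProbabilityMeasure μ] {f : Ω → ℝ} (hf0 : 0 ≤ f)
    (hf : Integrable f μ) (n : ℕ) (hint : Integrable (fun x => f x ^ n) μ) :
    (∫ x, f x ∂μ) ^ n ≤ ∫ x, f x ^ n ∂μ :=
  (convexOn_pow n).map_integral_le (continuous_pow n).continuousOn isClosed_Ici
    (ae_of_all _ hf0) hf hint

lemma integral_abs_sub_integral_pow_three_le [IsProbabilityMeasure μ] {f : Ω → ℝ}
    (hf : AEStronglyMeasurable f μ) (hf0 : 0 ≤ f) (hint : Integrable (fun x => f x ^ 3) μ) :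
    ∫ x, |f x - ∫ y, f y ∂μ| ^ 3 ∂μ ≤ 2 * ∫ x, f x ^ 3 ∂μ := by
  have hfi := integrable_of_integrable_pow_of_nonneg hf hf0 three_ne_zero hint
  have hmean0 : 0 ≤ ∫ y, f y ∂μ := integral_nonneg hf0
  calc ∫ x, |f x - ∫ y, f y ∂μ| ^ 3 ∂μ
      ≤ ∫ x, (f x ^ 3 + (∫ y, f y ∂μ) ^ 3) ∂μ :=
        integral_mono_of_nonneg (ae_of_all _ fun x => by positivity)
          (hint.add (integrable_const _))
          (ae_of_all _ fun x => abs_sub_pow_three_le_add (hf0 x) hmean0)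
    _ = ∫ x, f x ^ 3 ∂μ + (∫ y, f y ∂μ) ^ 3 := by
        rw [integral_add hint (integrable_const _), integral_const, probReal_univ, one_smul]
    _ ≤ 2 * ∫ x, f x ^ 3 ∂μ := by
        linarith [pow_integral_le_integral_pow hf0 hfi 3 hint]

end Moments

section TiltedCGF

variable {Ω : Type*} {m : MeasurableSpace Ω} {μ : Measure Ω} {X : Ω → ℝ} {t : ℝ}

lemma integrable_exp_mul_of_nonneg_of_nonpos [IsFiniteMeasure μ] (hX : AEMeasurable X μ)
    (hX0 : 0 ≤ X) (ht : t ≤ 0) : Integrable (fun ω => exp (t * X ω)) μ :=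
  .of_mem_Icc 0 1 (measurable_exp.comp_aemeasurable (hX.const_mul t)) <| ae_of_all _ fun ω =>
    ⟨(exp_pos _).le, exp_le_one_iff.2 (mul_nonpos_of_nonpos_of_nonneg ht (hX0 ω))⟩

lemma cgf_nonpos_of_nonneg_of_nonpos [IsProbabilityMeasure μ] (hX0 : 0 ≤ X) (ht : t ≤ 0) :
    cgf X μ t ≤ 0 := by
  refine log_nonpos mgf_nonneg ?_
  calc mgf X μ t ≤ ∫ _, (1 : ℝ) ∂μ :=
        integral_mono_of_nonneg (ae_of_all _ fun ω => (exp_pos _).le) (integrable_const 1)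
          (ae_of_all _ fun ω => exp_le_one_iff.2 (mul_nonpos_of_nonpos_of_nonneg ht (hX0 ω)))
    _ = 1 := by simp

lemma mul_integral_le_cgf [IsProbabilityMeasure μ] (hX : Integrable X μ)
    (h_int : Integrable (fun ω => exp (t * X ω)) μ) : t * ∫ ω, X ω ∂μ ≤ cgf X μ t := by
  have hjensen : exp (∫ ω, t * X ω ∂μ) ≤ mgf X μ t :=
    convexOn_exp.map_integral_le continuous_exp.continuousOn isClosed_univ
      (ae_of_all _ fun _ => Set.mem_univ _) (hX.const_mul t) h_int
  rw [integral_const_mul] at hjensen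
  exact (le_log_iff_exp_le (mgf_pos h_int)).2 hjensen

lemma neg_cgf_neg_pow_three_le [IsProbabilityMeasure μ] (hX : AEMeasurable X μ) (hX0 : 0 ≤ X)
    (hX3 : Integrable (fun ω => X ω ^ 3) μ) {s : ℝ} (hs : 0 ≤ s) :
    (-cgf X μ (-s)) ^ 3 ≤ s ^ 3 * ∫ ω, X ω ^ 3 ∂μ := by
  have hXi := integrable_of_integrable_pow_of_nonneg hX.aestronglyMeasurable hX0 three_ne_zero hX3
  have hlower : 0 ≤ -cgf X μ (-s) := neg_nonneg.2 (cgf_nonpos_of_nonneg_of_nonpos hX0 (by linarith))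
  have hupper : -cgf X μ (-s) ≤ s * ∫ ω, X ω ∂μ := by
    have := mul_integral_le_cgf (t := -s) hXi
      (integrable_exp_mul_of_nonneg_of_nonpos hX hX0 (by linarith))
    linarith
  calc (-cgf X μ (-s)) ^ 3 ≤ (s * ∫ ω, X ω ∂μ) ^ 3 := pow_le_pow_left₀ hlower hupper 3
    _ = s ^ 3 * (∫ ω, X ω ∂μ) ^ 3 := by ring
    _ ≤ s ^ 3 * ∫ ω, X ω ^ 3 ∂μ := by
        gcongr
        exact pow_integral_le_integral_pow hX0 hXi 3 hX3

end TiltedCGF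

/-- Per-coordinate centered third absolute moment bound for the d-tilted information:
`E[|ȷ(X) − E[ȷ(X)]|³] ≤ 32 λ³ (E[d(X,Y)³] + c³)`. -/
theorem third_moment_tilted_information_le
    {α β : Type*} [MeasurableSpace α] [MeasurableSpace β]
    (μ : Measure α) (ν : Measure β) [IsProbabilityMeasure μ] [IsProbabilityMeasure ν]
    (dist : α → β → ℝ) (hmeas : Measurable (Function.uncurry dist))
    (hnn : ∀ x y, 0 ≤ dist x y)
    (hint : Integrable (fun p : α × β => (dist p.1 p.2) ^ 3) (μ.prod ν))
    (lam c : ℝ) (hlam : 0 ≤ lam) (hc : 0 ≤ c)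
    (j : α → ℝ)
    (hj : ∀ x, j x = -lam * c - Real.log (∫ y, Real.exp (-lam * dist x y) ∂ν)) :
    (∫ x, |j x - ∫ x', j x' ∂μ| ^ 3 ∂μ) ≤
      32 * lam ^ 3 * ((∫ p : α × β, (dist p.1 p.2) ^ 3 ∂(μ.prod ν)) + c ^ 3) := by
  set g : α → ℝ := fun x => -cgf (dist x) ν (-lam)
  have hjg : ∀ x, j x = -lam * c + g x := fun x => by rw [hj x]; simp only [g, cgf, mgf]; ring
  have hg0 : 0 ≤ g := fun x => neg_nonneg.2 (cgf_nonpos_of_nonneg_of_nonpos (hnn x) (by linarith))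
  have hgm : AEStronglyMeasurable g μ :=
    ((StronglyMeasurable.integral_prod_right' (f := fun p : α × β => exp (-lam * dist p.1 p.2))
      (hmeas.const_mul _).exp.stronglyMeasurable).measurable.log.neg).aestronglyMeasurable
  have hg3 : ∀ᵐ x ∂μ, g x ^ 3 ≤ lam ^ 3 * ∫ y, dist x y ^ 3 ∂ν := by
    filter_upwards [hint.prod_right_ae] with x hx
    exact neg_cgf_neg_pow_three_le (hmeas.comp measurable_prodMk_left).aemeasurable (hnn x) hx hlam
  have hg3int : Integrable (fun x => g x ^ 3) μ :=
    (hint.integral_prod_left.const_mul _).mono' (hgm.pow 3) <| by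
      filter_upwards [hg3] with x hx
      rwa [Real.norm_of_nonneg (pow_nonneg (hg0 x) 3)]
  have hgi := integrable_of_integrable_pow_of_nonneg hgm hg0 three_ne_zero hg3int
  have hcenter : ∀ x, j x - ∫ x', j x' ∂μ = g x - ∫ x', g x' ∂μ := fun x => by
    simp only [hjg, integral_add (integrable_const _) hgi, integral_const, probReal_univ, one_smul]
    ring
  have hdist3 : 0 ≤ ∫ p : α × β, (dist p.1 p.2) ^ 3 ∂(μ.prod ν) :=
    integral_nonneg fun p => pow_nonneg (hnn _ _) 3
  calc (∫ x, |j x - ∫ x', j x' ∂μ| ^ 3 ∂μ) = ∫ x, |g x - ∫ x', g x' ∂μ| ^ 3 ∂μ := by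
        simp only [hcenter]
    _ ≤ 2 * ∫ x, g x ^ 3 ∂μ := integral_abs_sub_integral_pow_three_le hgm hg0 hg3int
    _ ≤ 2 * ∫ x, lam ^ 3 * ∫ y, dist x y ^ 3 ∂ν ∂μ := by
        gcongr 2 * ?_
        exact integral_mono_ae hg3int (hint.integral_prod_left.const_mul _) hg3
    _ = 2 * lam ^ 3 * ∫ p : α × β, (dist p.1 p.2) ^ 3 ∂(μ.prod ν) := by
        rw [integral_const_mul, integral_prod _ hint]; ring
    _ ≤ 32 * lam ^ 3 * ((∫ p : α × β, (dist p.1 p.2) ^ 3 ∂(μ.prod ν)) + c ^ 3) := by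
        have := pow_nonneg hlam 3
        nlinarith [mul_nonneg this hdist3, mul_nonneg this (pow_nonneg hc 3)]
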